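/- Fix an integer d ≥ 1, a real number t > 0 and a > 0. Then for every λ ∈ ℂ with |Im λ| ≤ a and λ ≠ ia, λ ≠ −ia, one has |ψ_λ(t e₁)| < ψ_{ia}(t e₁). (Note that ψ_{ia}(t e₁) = |B(0,1)|^{-1} ∫_{B(0,1)} e^{a t e₁·y} dy is a positive real number.) -/

import Mathlib

/-!
The modulus of `exp (-i λ ⟪ξ, y⟫)` is `exp (Im λ ⟪ξ, y⟫)`. Since the ball is symmetric under
`y ↦ -y`, the integral of `exp (s ⟪ξ, y⟫)` over it equals that of `cosh (s ⟪ξ, y⟫)`, which is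
strictly increasing in `|s|` because `⟪ξ, y⟫ ≠ 0` off a null hyperplane. This settles the case
`|Im λ| < a` through the triangle inequality. When `|Im λ| = a`, the exclusion `λ ≠ ± i a` forces
`Re λ ≠ 0`; the phase `exp (-i Re λ ⟪ξ, y⟫)` is then not a.e. constant on the ball (its level sets
are countable unions of hyperplanes), so the triangle inequality itself is strict.
-/

open MeasureTheory Complex
open scoped ENNReal

/-- `ψ_λ(ξ) = |B(0,1)|⁻¹ ∫_{B(0,1)} e^{-iλ ξ·y} dy`. -/
noncomputable def psiFn (d : ℕ) (lam : ℂ) (ξ : EuclideanSpace ℝ (Fin d)) : ℂ :=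
  (((volume (Metric.ball (0 : EuclideanSpace ℝ (Fin d)) 1)).toReal : ℂ))⁻¹ *
    ∫ y in Metric.ball (0 : EuclideanSpace ℝ (Fin d)) 1,
      Complex.exp (-(Complex.I * lam * ((inner ℝ ξ y : ℝ) : ℂ)))

open Metric
open scoped RealInnerProductSpace

section Integral

variable {α : Type*} [MeasurableSpace α] {μ : Measure α}

theorem integral_lt_integral_of_ae_lt {f g : α → ℝ} (hf : Integrable f μ) (hg : Integrable g μ)
    (hμ : μ ≠ 0) (h : ∀ᵐ x ∂μ, f x < g x) : ∫ x, f x ∂μ < ∫ x, g x ∂μ := by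
  have : (ae μ).NeBot := ae_neBot.2 hμ
  rw [← sub_pos, ← integral_sub hg hf, integral_pos_iff_support_of_nonneg_ae
    (h.mono fun x hx => (sub_pos.2 hx).le) (hg.sub hf), pos_iff_ne_zero]
  exact frequently_ae_iff.1 (h.frequently.mono fun x hx => (sub_pos.2 hx).ne')

/-- Strict convexity of `E`, applied to `g` under the finite measure `w • μ`. -/
theorem norm_integral_smul_lt_integral {E : Type*} [NormedAddCommGroup E] [NormedSpace ℝ E]
    [CompleteSpace E] [StrictConvexSpace ℝ E] {w : α → ℝ} {g : α → E} (hw : Integrable w μ)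
    (hw_pos : ∀ᵐ x ∂μ, 0 < w x) (hg : ∀ᵐ x ∂μ, ‖g x‖ ≤ 1)
    (hg_nonconst : ∀ c, ¬ g =ᵐ[μ] fun _ => c) :
    ‖∫ x, w x • g x ∂μ‖ < ∫ x, w x ∂μ := by
  set ρ := μ.withDensity fun x => ENNReal.ofReal (w x)
  have : IsFiniteMeasure ρ := isFiniteMeasure_withDensity_ofReal hw.2
  have hw_nonneg : 0 ≤ᵐ[μ] w := hw_pos.mono fun x hx => hx.le
  have hintegral : ∫ x, g x ∂ρ = ∫ x, w x • g x ∂μ := by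
    rw [integral_withDensity_eq_integral_toReal_smul₀ hw.aemeasurable.ennreal_ofReal
      (ae_of_all _ fun _ => ENNReal.ofReal_lt_top)]
    refine integral_congr_ae (hw_nonneg.mono fun x hx => ?_)
    simp only [ENNReal.toReal_ofReal hx]
  have hmass : ρ.real Set.univ = ∫ x, w x ∂μ := by
    rw [measureReal_def, withDensity_apply _ MeasurableSet.univ, Measure.restrict_univ,
      ← ofReal_integral_eq_lintegral_ofReal hw hw_nonneg,
      ENNReal.toReal_ofReal (integral_nonneg_of_ae hw_nonneg)]
  rcases ae_eq_const_or_norm_integral_lt_of_norm_le_const (μ := ρ)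
    (withDensity_absolutelyContinuous μ _ hg) with hconst | hlt
  · have hμρ : μ ≪ ρ := withDensity_absolutelyContinuous' hw.aemeasurable.ennreal_ofReal
      (hw_pos.mono fun x hx => (ENNReal.ofReal_pos.2 hx).ne')
    exact absurd (hμρ.ae_eq hconst) (hg_nonconst _)
  · rwa [hintegral, hmass, mul_one] at hlt

end Integral

section Ball

variable {X : Type*} [MetricSpace X] [MeasurableSpace X] {μ : Measure X}

theorem integrableOn_ball_of_continuous [ProperSpace X] [OpensMeasurableSpace X]
    [IsFiniteMeasureOnCompacts μ] {F : Type*} [NormedAddCommGroup F] {f : X → F}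
    (hf : Continuous f) (x : X) (r : ℝ) : IntegrableOn f (ball x r) μ :=
  (hf.continuousOn.integrableOn_compact (isCompact_closedBall x r)).mono_set ball_subset_closedBall

theorem restrict_ball_ne_zero [μ.IsOpenPosMeasure] (x : X) {r : ℝ} (hr : 0 < r) :
    μ.restrict (ball x r) ≠ 0 :=
  Measure.restrict_eq_zero.not.2 (measure_ball_pos μ x hr).ne'

end Ball

theorem countable_setOf_exp_eq {m : ℝ} (hm : m ≠ 0) (c : ℂ) :
    {s : ℝ | Complex.exp (-(I * m * s)) = c}.Countable := by
  rcases Set.eq_empty_or_nonempty {s : ℝ | Complex.exp (-(I * m * s)) = c} with h | ⟨s₀, hs₀⟩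
  · simp [h]
  refine (Set.countable_range fun n : ℤ => s₀ - n * (2 * Real.pi) / m).mono fun s hs => ?_
  obtain ⟨n, hn⟩ : ∃ n : ℤ, -(I * m * s) = -(I * m * s₀) + n * (2 * Real.pi * I) :=
    Complex.exp_eq_exp_iff_exists_int.1 (hs.trans hs₀.symm)
  refine ⟨n, ?_⟩
  have := congrArg Complex.im hn
  simp only [neg_im, mul_im, mul_re, I_re, I_im, ofReal_re, ofReal_im, add_im, intCast_re,
    intCast_im, re_ofNat, im_ofNat] at this
  field_simp
  linarith

theorem setIntegral_ball_comp_neg {E F : Type*} [NormedAddCommGroup E] [MeasurableSpace E]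
    [BorelSpace E] [NormedAddCommGroup F] [NormedSpace ℝ F] {μ : Measure E} [μ.IsNegInvariant]
    (f : E → F) (r : ℝ) : ∫ y in ball 0 r, f (-y) ∂μ = ∫ y in ball 0 r, f y ∂μ := by
  rw [← integral_indicator measurableSet_ball, ← integral_indicator measurableSet_ball,
    ← integral_neg_eq_self]
  congr 1 with y
  by_cases hy : y ∈ ball (0 : E) r <;> simp_all

section InnerProduct

variable {E : Type*} [NormedAddCommGroup E] [InnerProductSpace ℝ E] [FiniteDimensional ℝ E]
  [MeasurableSpace E] [BorelSpace E] {μ : Measure E} [μ.IsAddHaarMeasure] {ξ : E} {r : ℝ}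

theorem ae_inner_notMem (hξ : ξ ≠ 0) {S : Set ℝ} (hS : S.Countable) :
    ∀ᵐ y ∂μ, ⟪ξ, y⟫ ∉ S :=
  (ae_comp_linearMap_mem_iff (innerₛₗ ℝ ξ) μ volume
    (LinearMap.surjective_iff_ne_zero.2 fun h =>
      hξ (inner_self_eq_zero.1 (LinearMap.congr_fun h ξ)))
    hS.measurableSet.compl).2 (measure_eq_zero_iff_ae_notMem.1 (hS.measure_zero volume))

theorem setIntegral_ball_exp_inner_eq_cosh (ξ : E) (s r : ℝ) :
    ∫ y in ball 0 r, Real.exp (s * ⟪ξ, y⟫) ∂μ = ∫ y in ball 0 r, Real.cosh (s * ⟪ξ, y⟫) ∂μ := by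
  have hint : ∀ s', IntegrableOn (fun y => Real.exp (s' * ⟪ξ, y⟫)) (ball 0 r) μ := fun s' =>
    integrableOn_ball_of_continuous (by fun_prop) 0 r
  have hsym : ∫ y in ball 0 r, Real.exp (-s * ⟪ξ, y⟫) ∂μ
      = ∫ y in ball 0 r, Real.exp (s * ⟪ξ, y⟫) ∂μ := by
    simpa [inner_neg_right] using
      setIntegral_ball_comp_neg (μ := μ) (fun y => Real.exp (s * ⟪ξ, y⟫)) r
  simp_rw [Real.cosh_eq, ← neg_mul]
  rw [integral_div, integral_add (hint s) (hint (-s)), hsym]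
  ring

theorem setIntegral_ball_cosh_inner_lt (hξ : ξ ≠ 0) (hr : 0 < r) {b c : ℝ} (hbc : |b| < |c|) :
    ∫ y in ball 0 r, Real.cosh (b * ⟪ξ, y⟫) ∂μ < ∫ y in ball 0 r, Real.cosh (c * ⟪ξ, y⟫) ∂μ := by
  refine integral_lt_integral_of_ae_lt (integrableOn_ball_of_continuous (by fun_prop) 0 r)
    (integrableOn_ball_of_continuous (by fun_prop) 0 r) (restrict_ball_ne_zero 0 hr)
    (ae_restrict_of_ae ((ae_inner_notMem hξ (Set.countable_singleton 0)).mono fun y hy => ?_))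
  rw [Real.cosh_lt_cosh, abs_mul, abs_mul]
  exact mul_lt_mul_of_pos_right hbc (abs_pos.2 hy)

theorem norm_setIntegral_ball_exp_lt (hξ : ξ ≠ 0) (hr : 0 < r) {lam : ℂ} (hre : lam.re ≠ 0) :
    ‖∫ y in ball 0 r, Complex.exp (-(I * lam * ⟪ξ, y⟫)) ∂μ‖
      < ∫ y in ball 0 r, Real.exp (lam.im * ⟪ξ, y⟫) ∂μ := by
  have hsplit : ∀ y, Complex.exp (-(I * lam * ⟪ξ, y⟫))
      = Real.exp (lam.im * ⟪ξ, y⟫) • Complex.exp (-(I * lam.re * ⟪ξ, y⟫)) := by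
    intro y
    rw [Complex.real_smul, Complex.ofReal_exp, ← Complex.exp_add]
    congr 1
    nth_rewrite 1 [← Complex.re_add_im lam]
    push_cast
    linear_combination -(lam.im * ⟪ξ, y⟫ : ℂ) * I_sq
  simp_rw [hsplit]
  refine norm_integral_smul_lt_integral (integrableOn_ball_of_continuous (by fun_prop) 0 r)
    (ae_of_all _ fun y => Real.exp_pos _) (ae_of_all _ fun y => by simp [Complex.norm_exp])
    fun c hc => ?_
  have : (ae (μ.restrict (ball 0 r))).NeBot := ae_neBot.2 (restrict_ball_ne_zero 0 hr)
  obtain ⟨y, hyc, hy⟩ := (hc.and (ae_restrict_of_ae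
    (ae_inner_notMem hξ (countable_setOf_exp_eq hre c)))).exists
  exact hy hyc

theorem norm_setIntegral_ball_exp_lt_of_abs_im_le (hξ : ξ ≠ 0) (hr : 0 < r) {lam : ℂ} {a : ℝ}
    (hstrip : |lam.im| ≤ a) (h1 : lam ≠ I * a) (h2 : lam ≠ -(I * a)) :
    ‖∫ y in ball 0 r, Complex.exp (-(I * lam * ⟪ξ, y⟫)) ∂μ‖
      < ∫ y in ball 0 r, Real.exp (a * ⟪ξ, y⟫) ∂μ := by
  rw [setIntegral_ball_exp_inner_eq_cosh]
  rcases hstrip.lt_or_eq with hlt | heq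
  · calc ‖∫ y in ball 0 r, Complex.exp (-(I * lam * ⟪ξ, y⟫)) ∂μ‖
        ≤ ∫ y in ball 0 r, ‖Complex.exp (-(I * lam * ⟪ξ, y⟫))‖ ∂μ :=
          norm_integral_le_integral_norm _
      _ = ∫ y in ball 0 r, Real.exp (lam.im * ⟪ξ, y⟫) ∂μ := by
          congr with y
          simp [Complex.norm_exp]
      _ = ∫ y in ball 0 r, Real.cosh (lam.im * ⟪ξ, y⟫) ∂μ :=
          setIntegral_ball_exp_inner_eq_cosh ξ _ r
      _ < ∫ y in ball 0 r, Real.cosh (a * ⟪ξ, y⟫) ∂μ :=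
          setIntegral_ball_cosh_inner_lt hξ hr (hlt.trans_le (le_abs_self a))
  · have hre : lam.re ≠ 0 := by
      intro hre
      rcases (abs_eq ((abs_nonneg _).trans heq.le)).1 heq with him | him
      · exact h1 (Complex.ext (by simp [hre]) (by simp [him]))
      · exact h2 (Complex.ext (by simp [hre]) (by simp [him]))
    calc ‖∫ y in ball 0 r, Complex.exp (-(I * lam * ⟪ξ, y⟫)) ∂μ‖
        < ∫ y in ball 0 r, Real.exp (lam.im * ⟪ξ, y⟫) ∂μ := norm_setIntegral_ball_exp_lt hξ hr hre
      _ = ∫ y in ball 0 r, Real.cosh (lam.im * ⟪ξ, y⟫) ∂μ :=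
          setIntegral_ball_exp_inner_eq_cosh ξ _ r
      _ = ∫ y in ball 0 r, Real.cosh (a * ⟪ξ, y⟫) ∂μ := by
          congr with y
          rw [← heq]
          rcases abs_choice lam.im with h | h <;> simp [h, neg_mul]

end InnerProduct

theorem norm_psiFn (d : ℕ) (lam : ℂ) (ξ : EuclideanSpace ℝ (Fin d)) :
    ‖psiFn d lam ξ‖ = (volume (ball (0 : EuclideanSpace ℝ (Fin d)) 1)).toReal⁻¹ *
      ‖∫ y in ball 0 1, Complex.exp (-(I * lam * ⟪ξ, y⟫))‖ := by
  rw [psiFn, norm_mul, norm_inv, Complex.norm_real, Real.norm_of_nonneg ENNReal.toReal_nonneg]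

theorem re_psiFn_I_mul (d : ℕ) (a : ℝ) (ξ : EuclideanSpace ℝ (Fin d)) :
    (psiFn d (I * a) ξ).re = (volume (ball (0 : EuclideanSpace ℝ (Fin d)) 1)).toReal⁻¹ *
      ∫ y in ball 0 1, Real.exp (a * ⟪ξ, y⟫) := by
  have hreal : ∀ y : EuclideanSpace ℝ (Fin d),
      Complex.exp (-(I * (I * a) * ⟪ξ, y⟫)) = Real.exp (a * ⟪ξ, y⟫) := by
    intro y
    rw [Complex.ofReal_exp]
    congr 1
    push_cast
    linear_combination -(a * ⟪ξ, y⟫ : ℂ) * I_sq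
  simp_rw [psiFn, hreal, integral_complex_ofReal, ← ofReal_inv, ← ofReal_mul, ofReal_re]

theorem norm_psiFn_lt_re_psiFn {d : ℕ} {ξ : EuclideanSpace ℝ (Fin d)} (hξ : ξ ≠ 0) {lam : ℂ}
    {a : ℝ} (hstrip : |lam.im| ≤ a) (h1 : lam ≠ I * a) (h2 : lam ≠ -(I * a)) :
    ‖psiFn d lam ξ‖ < (psiFn d (I * a) ξ).re := by
  rw [norm_psiFn, re_psiFn_I_mul]
  exact mul_lt_mul_of_pos_left
    (norm_setIntegral_ball_exp_lt_of_abs_im_le hξ one_pos hstrip h1 h2)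
    (inv_pos.2 (ENNReal.toReal_pos (measure_ball_pos _ _ one_pos).ne' measure_ball_lt_top.ne))

/-- For `λ` in the strip `|Im λ| ≤ a` with `λ ≠ ± i a`, one has `|ψ_λ(t e₁)| < ψ_{ia}(t e₁)`
(the latter being a positive real number, expressed here via its real part). -/
theorem statement3 (d : ℕ) (hd : 1 ≤ d) (t a : ℝ) (ht : 0 < t)
    (lam : ℂ) (hstrip : |lam.im| ≤ a)
    (h1 : lam ≠ Complex.I * (a : ℂ)) (h2 : lam ≠ -(Complex.I * (a : ℂ))) :
    ‖psiFn d lam (t • EuclideanSpace.single (⟨0, by omega⟩ : Fin d) 1)‖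
      < (psiFn d (Complex.I * (a : ℂ)) (t • EuclideanSpace.single (⟨0, by omega⟩ : Fin d) 1)).re :=
  norm_psiFn_lt_re_psiFn
    (smul_ne_zero ht.ne' ((PiLp.single_eq_zero_iff 2 _).not.2 one_ne_zero)) hstrip h1 h2
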